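/- arXiv:2605.25889 — 4 statements merged into one kernel-verified Lean document; each statement's English description precedes it below -/
import Mathlib

section
/- Let (Ω, μ) be a probability space, let 𝒳, 𝒜, 𝒜q, 𝒟 be finite types, let X, X̃ : Ω → 𝒳, δ : Ω → 𝒟, and A⋆ : Ω → 𝒜 be measurable random variables, let π : 𝒳 → 𝒜 be any function, and let q : 𝒜 → 𝒜q be any (deterministic) quantizer. Then I[q ∘ A⋆ : q ∘ π ∘ X] + ( I[q ∘ π ∘ X : q ∘ π ∘ X̃] − I[q ∘ π ∘ X : δ] ) ≤ H[q ∘ A⋆] + I[X : X̃] ≤ Real.log (Fintype.card 𝒜q) + I[X : X̃]. -/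
open MeasureTheory ProbabilityTheory Finset
set_option linter.unusedSectionVars false

/-- Shannon entropy (in nats) of a random variable `X` taking values in a finite type,
with respect to the measure `μ`: `H[X] = - ∑ s, p(s) log p(s)` where `p(s) = μ (X ⁻¹' {s})`. -/
noncomputable def shannonEntropy {Ω : Type*} [MeasurableSpace Ω] {S : Type*} [Fintype S]
    (μ : Measure Ω) (X : Ω → S) : ℝ :=
  - ∑ s : S, (μ (X ⁻¹' {s})).toReal * Real.log (μ (X ⁻¹' {s})).toReal

/-- Mutual information (in nats) `I[X : Y] = H[X] + H[Y] - H[(X, Y)]`. -/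
noncomputable def mutualInfo {Ω : Type*} [MeasurableSpace Ω] {S T : Type*} [Fintype S] [Fintype T]
    (μ : Measure Ω) (X : Ω → S) (Y : Ω → T) : ℝ :=
  shannonEntropy μ X + shannonEntropy μ Y - shannonEntropy μ (fun ω => (X ω, Y ω))

/-- Conditional Shannon entropy `H[X | Z] = H[(X, Z)] - H[Z]`. -/
noncomputable def condEntropy' {Ω : Type*} [MeasurableSpace Ω] {S T : Type*} [Fintype S] [Fintype T]
    (μ : Measure Ω) (X : Ω → S) (Z : Ω → T) : ℝ :=
  shannonEntropy μ (fun ω => (X ω, Z ω)) - shannonEntropy μ Z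

/-- Conditional mutual information `I[X : Y | Z] = H[X | Z] + H[Y | Z] - H[(X, Y) | Z]`. -/
noncomputable def condMutualInfo' {Ω : Type*} [MeasurableSpace Ω] {S T U : Type*}
    [Fintype S] [Fintype T] [Fintype U]
    (μ : Measure Ω) (X : Ω → S) (Y : Ω → T) (Z : Ω → U) : ℝ :=
  condEntropy' μ X Z + condEntropy' μ Y Z - condEntropy' μ (fun ω => (X ω, Y ω)) Z


/-- Log-sum inequality. -/
lemma log_sum_ineq {ι : Type*} (s : Finset ι) (w c : ι → ℝ)
    (hw : ∀ i ∈ s, 0 ≤ w i) (hc : ∀ i ∈ s, 0 ≤ c i)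
    (hac : ∀ i ∈ s, c i = 0 → w i = 0) :
    (∑ i ∈ s, w i) * Real.log ((∑ i ∈ s, w i) / (∑ i ∈ s, c i))
      ≤ ∑ i ∈ s, w i * Real.log (w i / c i) := by
  set W := ∑ i ∈ s, w i with hW
  set C := ∑ i ∈ s, c i with hC
  rcases eq_or_lt_of_le (Finset.sum_nonneg hw) with hW0 | hWpos
  · have hz : ∀ i ∈ s, w i = 0 := (Finset.sum_eq_zero_iff_of_nonneg hw).mp hW0.symm
    have h1 : W = 0 := hW0.symm
    have h2 : (∑ i ∈ s, w i * Real.log (w i / c i)) = 0 :=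
      Finset.sum_eq_zero fun i hi => by rw [hz i hi, zero_mul]
    rw [h1, h2, zero_mul]
  · -- W > 0, so some w i > 0, hence c i > 0, so C > 0
    have hCpos : 0 < C := by
      obtain ⟨i, hi, hwi⟩ : ∃ i ∈ s, 0 < w i := by
        by_contra h
        push_neg at h
        have : W = 0 := Finset.sum_eq_zero fun i hi => le_antisymm (h i hi) (hw i hi)
        linarith
      have hci : 0 < c i := by
        rcases (hc i hi).lt_or_eq with h | h
        · exact h
        · exact absurd (hac i hi h.symm) (by linarith)
      exact lt_of_lt_of_le hci (Finset.single_le_sum hc hi)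
    have key : ∀ i ∈ s, w i - (W / C) * c i
        ≤ w i * Real.log (w i / c i) - w i * Real.log (W / C) := by
      intro i hi
      rcases (hw i hi).lt_or_eq with hwi | hwi
      · have hci : 0 < c i := by
          rcases (hc i hi).lt_or_eq with h | h
          · exact h
          · exact absurd (hac i hi h.symm) (by linarith)
        have hx : 0 < (w i * C) / (c i * W) := by positivity
        have hlog : Real.log ((c i * W) / (w i * C)) ≤ (c i * W) / (w i * C) - 1 :=
          Real.log_le_sub_one_of_pos (by positivity)
        have hinv : Real.log ((c i * W) / (w i * C)) = - Real.log ((w i * C) / (c i * W)) := by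
          rw [← Real.log_inv]
          congr 1
          field_simp
        have h1 : 1 - (c i * W) / (w i * C) ≤ Real.log ((w i * C) / (c i * W)) := by
          rw [hinv] at hlog
          linarith
        have hsplit : Real.log ((w i * C) / (c i * W))
            = Real.log (w i / c i) - Real.log (W / C) := by
          rw [Real.log_div (by positivity) (by positivity), Real.log_mul (ne_of_gt hwi) (ne_of_gt hCpos),
            Real.log_mul (ne_of_gt hci) (ne_of_gt hWpos),
            Real.log_div (ne_of_gt hwi) (ne_of_gt hci), Real.log_div (ne_of_gt hWpos) (ne_of_gt hCpos)]
          ring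
        have hmul := mul_le_mul_of_nonneg_left h1 (le_of_lt hwi)
        rw [hsplit] at hmul
        have : w i * (1 - (c i * W) / (w i * C)) = w i - (W / C) * c i := by
          field_simp
        rw [this] at hmul
        linarith [mul_sub (w i) (Real.log (w i / c i)) (Real.log (W / C)), hmul]
      · rw [← hwi]
        have : 0 ≤ (W / C) * c i := mul_nonneg (div_nonneg hWpos.le hCpos.le) (hc i hi)
        simp only [zero_mul, sub_self]
        linarith
    have hsum := Finset.sum_le_sum key
    rw [Finset.sum_sub_distrib, Finset.sum_sub_distrib, ← Finset.mul_sum, ← Finset.sum_mul] at hsum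
    have hWC : (W / C) * C = W := div_mul_cancel₀ W (ne_of_gt hCpos)
    rw [← hW, ← hC] at hsum
    nlinarith [hsum, hWC]
section KL
variable {S T S' T' : Type*} [Fintype S] [Fintype T] [Fintype S'] [Fintype T']

noncomputable def distEnt {S : Type*} [Fintype S] (v : S → ℝ) : ℝ := ∑ s, Real.negMulLog (v s)

noncomputable def push {S S' : Type*} [Fintype S] [DecidableEq S'] (φ : S → S') (v : S → ℝ) :
    S' → ℝ :=
  fun a => ∑ s ∈ univ.filter (fun s => φ s = a), v s

noncomputable def Ifun {S T : Type*} [Fintype S] [Fintype T] [DecidableEq S] [DecidableEq T]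
    (w : S × T → ℝ) : ℝ :=
  distEnt (push Prod.fst w) + distEnt (push Prod.snd w) - distEnt w

variable [DecidableEq S] [DecidableEq T]

lemma push_fst_apply (w : S × T → ℝ) (s : S) : push Prod.fst w s = ∑ t, w (s, t) := by
  rw [push]
  have : univ.filter (fun z : S × T => z.1 = s) = ({s} : Finset S) ×ˢ univ := by
    ext z
    simp only [mem_filter, mem_univ, true_and, Finset.mem_product, Finset.mem_singleton]
    exact ⟨fun h => ⟨h, trivial⟩, fun h => h.1⟩
  rw [this, Finset.sum_product, Finset.sum_singleton]

lemma push_snd_apply (w : S × T → ℝ) (t : T) : push Prod.snd w t = ∑ s, w (s, t) := by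
  rw [push]
  have : univ.filter (fun z : S × T => z.2 = t) = univ ×ˢ ({t} : Finset T) := by
    ext z
    simp only [mem_filter, mem_univ, true_and, Finset.mem_product, Finset.mem_singleton]
  rw [this, Finset.sum_product]
  simp

lemma le_push_fst (w : S × T → ℝ) (hw : ∀ z, 0 ≤ w z) (z : S × T) :
    w z ≤ push Prod.fst w z.1 := by
  rw [push_fst_apply]
  exact Finset.single_le_sum (fun t _ => hw (z.1, t)) (Finset.mem_univ z.2)

lemma le_push_snd (w : S × T → ℝ) (hw : ∀ z, 0 ≤ w z) (z : S × T) :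
    w z ≤ push Prod.snd w z.2 := by
  rw [push_snd_apply]
  exact Finset.single_le_sum (fun s _ => hw (s, z.2)) (Finset.mem_univ z.1)

lemma Ifun_eq_KL (w : S × T → ℝ) (hw : ∀ z, 0 ≤ w z) :
    Ifun w = ∑ z : S × T,
      w z * Real.log (w z / (push Prod.fst w z.1 * push Prod.snd w z.2)) := by
  set p := push Prod.fst w with hp
  set r := push Prod.snd w with hr
  have hterm : ∀ z : S × T, w z * Real.log (w z / (p z.1 * r z.2))
      = w z * Real.log (w z) - w z * Real.log (p z.1) - w z * Real.log (r z.2) := by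
    intro z
    rcases (hw z).lt_or_eq with hpos | h0
    · have hp1 : 0 < p z.1 := lt_of_lt_of_le hpos (le_push_fst w hw z)
      have hr1 : 0 < r z.2 := lt_of_lt_of_le hpos (le_push_snd w hw z)
      rw [Real.log_div (ne_of_gt hpos) (by positivity),
        Real.log_mul (ne_of_gt hp1) (ne_of_gt hr1)]
      ring
    · rw [← h0]; ring
  rw [Finset.sum_congr rfl fun z _ => hterm z]
  rw [Finset.sum_sub_distrib, Finset.sum_sub_distrib]
  have e1 : ∑ z : S × T, w z * Real.log (w z) = - distEnt w := by
    rw [distEnt]; simp [Real.negMulLog, Finset.sum_neg_distrib]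
  have e2 : ∑ z : S × T, w z * Real.log (p z.1) = - distEnt p := by
    rw [Fintype.sum_prod_type, distEnt]
    simp only [Real.negMulLog, neg_mul, Finset.sum_neg_distrib, neg_neg]
    refine Finset.sum_congr rfl fun s _ => ?_
    rw [← Finset.sum_mul, ← push_fst_apply w s, ← hp]
  have e3 : ∑ z : S × T, w z * Real.log (r z.2) = - distEnt r := by
    rw [Fintype.sum_prod_type_right, distEnt]
    simp only [Real.negMulLog, neg_mul, Finset.sum_neg_distrib, neg_neg]
    refine Finset.sum_congr rfl fun t _ => ?_
    rw [← Finset.sum_mul, ← push_snd_apply w t, ← hr]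
  rw [e1, e2, e3, Ifun]
  ring
end KL

section Gibbs
variable {S T S' T' : Type*} [Fintype S] [Fintype T] [Fintype S'] [Fintype T']
variable [DecidableEq S] [DecidableEq T]

lemma push_nonneg {S S' : Type*} [Fintype S] [DecidableEq S'] {φ : S → S'} {v : S → ℝ}
    (hv : ∀ s, 0 ≤ v s) (a : S') : 0 ≤ push φ v a :=
  Finset.sum_nonneg fun s _ => hv s

lemma sum_push {S S' : Type*} [Fintype S] [Fintype S'] [DecidableEq S'] (φ : S → S')
    (v : S → ℝ) : ∑ a, push φ v a = ∑ s, v s := Finset.sum_fiberwise _ _ _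

lemma push_push {U V X : Type*} [Fintype U] [Fintype V] [DecidableEq V] [DecidableEq X]
    (ψ : U → V) (φ : V → X) (v : U → ℝ) :
    push φ (push ψ v) = push (fun s => φ (ψ s)) v := by
  funext a
  rw [push]
  have h1 : ∀ b ∈ univ.filter (fun b => φ b = a),
      push ψ v b = ∑ s ∈ (univ.filter (fun s => φ (ψ s) = a)).filter (fun s => ψ s = b), v s := by
    intro b hb
    simp only [mem_filter, mem_univ, true_and] at hb
    rw [push]
    congr 1
    ext s
    simp only [mem_filter, mem_univ, true_and, Finset.filter_filter]
    constructor
    · intro h; exact ⟨by rw [h, hb], h⟩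
    · exact fun h => h.2
  rw [Finset.sum_congr rfl h1]
  exact Finset.sum_fiberwise_of_maps_to (fun s hs => by
    simp only [mem_filter, mem_univ, true_and] at hs ⊢; exact hs) _

lemma prodc_ac (w : S × T → ℝ) (hw : ∀ z, 0 ≤ w z) (z : S × T)
    (h : push Prod.fst w z.1 * push Prod.snd w z.2 = 0) : w z = 0 := by
  rcases mul_eq_zero.mp h with h | h
  · exact le_antisymm (h ▸ le_push_fst w hw z) (hw z)
  · exact le_antisymm (h ▸ le_push_snd w hw z) (hw z)

lemma Ifun_nonneg (w : S × T → ℝ) (hw : ∀ z, 0 ≤ w z) (hsum : ∑ z, w z = 1) :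
    0 ≤ Ifun w := by
  rw [Ifun_eq_KL w hw]
  have hC : ∑ z : S × T, push Prod.fst w z.1 * push Prod.snd w z.2 = 1 := by
    rw [Fintype.sum_prod_type]
    simp only [← Finset.mul_sum]
    rw [← Finset.sum_mul, sum_push, sum_push, hsum]
    norm_num
  have := log_sum_ineq Finset.univ w
    (fun z => push Prod.fst w z.1 * push Prod.snd w z.2)
    (fun z _ => hw z)
    (fun z _ => mul_nonneg (push_nonneg hw _) (push_nonneg hw _))
    (fun z _ h => prodc_ac w hw z h)
  rw [hsum, hC] at this
  simpa using this

lemma Ifun_push_le [DecidableEq S'] [DecidableEq T'] (f : S → S') (g : T → T')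
    (w : S × T → ℝ) (hw : ∀ z, 0 ≤ w z) :
    Ifun (push (Prod.map f g) w) ≤ Ifun w := by
  classical
  set p := push Prod.fst w with hp
  set r := push Prod.snd w with hr
  set W := push (Prod.map f g) w with hW
  have hWnn : ∀ Z, 0 ≤ W Z := push_nonneg hw
  have hPfst : push Prod.fst W = push f p := by
    rw [hW, push_push, hp, push_push]
    simp only [Prod.map_fst]
  have hPsnd : push Prod.snd W = push g r := by
    rw [hW, push_push, hr, push_push]
    simp only [Prod.map_snd]
  rw [Ifun_eq_KL w hw, Ifun_eq_KL W hWnn, hPfst, hPsnd]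
  -- group RHS by fibers of Prod.map f g
  rw [← Finset.sum_fiberwise univ (Prod.map f g)
    (fun z => w z * Real.log (w z / (p z.1 * r z.2)))]
  refine Finset.sum_le_sum fun Z _ => ?_
  have hfib : univ.filter (fun z : S × T => Prod.map f g z = Z)
      = (univ.filter fun s => f s = Z.1) ×ˢ (univ.filter fun t => g t = Z.2) := by
    ext z
    simp only [mem_filter, mem_univ, true_and, Finset.mem_product, Prod.map, Prod.ext_iff]
  have hCval : ∑ z ∈ univ.filter (fun z : S × T => Prod.map f g z = Z), p z.1 * r z.2
      = push f p Z.1 * push g r Z.2 := by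
    rw [hfib, Finset.sum_product, push, push, Finset.sum_mul_sum]
  have hWval : W Z = ∑ z ∈ univ.filter (fun z : S × T => Prod.map f g z = Z), w z := rfl
  have := log_sum_ineq (univ.filter (fun z : S × T => Prod.map f g z = Z)) w
    (fun z => p z.1 * r z.2)
    (fun z _ => hw z)
    (fun z _ => mul_nonneg (push_nonneg hw _) (push_nonneg hw _))
    (fun z _ h => prodc_ac w hw z h)
  rw [hCval, ← hWval] at this
  exact this
end Gibbs

lemma negMulLog_sum_le {ι : Type*} (t : Finset ι) (v : ι → ℝ) (hv : ∀ i ∈ t, 0 ≤ v i) :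
    Real.negMulLog (∑ i ∈ t, v i) ≤ ∑ i ∈ t, Real.negMulLog (v i) := by
  have key : ∀ i ∈ t, - (v i * Real.log (∑ j ∈ t, v j)) ≤ Real.negMulLog (v i) := by
    intro i hi
    rcases (hv i hi).lt_or_eq with hpos | h0
    · have hle : v i ≤ ∑ j ∈ t, v j := Finset.single_le_sum hv hi
      have := Real.log_le_log (by exact hpos) hle
      rw [Real.negMulLog, neg_mul]
      nlinarith
    · rw [← h0]; simp [Real.negMulLog]
  calc Real.negMulLog (∑ i ∈ t, v i)
      = ∑ i ∈ t, - (v i * Real.log (∑ j ∈ t, v j)) := by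
        rw [Real.negMulLog, neg_mul, Finset.sum_neg_distrib, Finset.sum_mul]
    _ ≤ _ := Finset.sum_le_sum key

/-- Entropy does not increase under deterministic maps. -/
lemma distEnt_push_le {S S' : Type*} [Fintype S] [Fintype S'] [DecidableEq S']
    {φ : S → S'} {v : S → ℝ} (hv : ∀ s, 0 ≤ v s) : distEnt (push φ v) ≤ distEnt v := by
  rw [distEnt, distEnt, ← Finset.sum_fiberwise univ φ (fun s => Real.negMulLog (v s))]
  exact Finset.sum_le_sum fun a _ => negMulLog_sum_le _ _ fun i _ => hv i

section MaxEnt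
open Finset
lemma distEnt_le_log_card {S : Type*} [Fintype S] (v : S → ℝ)
    (hv : ∀ s, 0 ≤ v s) (hsum : ∑ s, v s = 1) :
    distEnt v ≤ Real.log (Fintype.card S) := by
  have hcard : 0 < Fintype.card S := by
    rcases Nat.eq_zero_or_pos (Fintype.card S) with h | h
    · exfalso
      have : IsEmpty S := Fintype.card_eq_zero_iff.mp h
      rw [Finset.univ_eq_empty, Finset.sum_empty] at hsum
      norm_num at hsum
    · exact h
  set n : ℝ := (Fintype.card S : ℝ) with hn
  have hnpos : 0 < n := by rw [hn]; exact_mod_cast hcard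
  have hCsum : ∑ _s : S, n⁻¹ = 1 := by
    rw [Finset.sum_const, Finset.card_univ, nsmul_eq_mul, hn]
    field_simp
  have hls := log_sum_ineq Finset.univ v (fun _ => n⁻¹)
    (fun s _ => hv s) (fun s _ => by positivity)
    (fun s _ h => absurd h (by positivity))
  rw [hsum, hCsum] at hls
  have hterm : ∀ s : S, v s * Real.log (v s / n⁻¹) = v s * Real.log (v s) + v s * Real.log n := by
    intro s
    rcases (hv s).lt_or_eq with hpos | h0
    · rw [Real.log_div (ne_of_gt hpos) (by positivity), Real.log_inv]
      ring
    · rw [← h0]; ring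
  rw [Finset.sum_congr rfl fun s _ => hterm s, Finset.sum_add_distrib, ← Finset.sum_mul,
    hsum, one_mul] at hls
  have : ∑ s, v s * Real.log (v s) = - distEnt v := by
    rw [distEnt]; simp [Real.negMulLog, Finset.sum_neg_distrib]
  rw [this] at hls
  simp only [div_self (ne_of_gt (by norm_num : (0:ℝ) < 1)), ne_eq, one_ne_zero,
    not_false_eq_true, Real.log_one, mul_zero] at hls
  linarith
end MaxEnt

section MeasureGlue
open Finset

variable {Ω : Type*} [MeasurableSpace Ω] (μ : Measure Ω) [IsProbabilityMeasure μ]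

/-- Distribution vector of a random variable. -/
noncomputable def rvDist {S : Type*} (μ : Measure Ω) (V : Ω → S) : S → ℝ :=
  fun s => (μ (V ⁻¹' {s})).toReal

lemma rvDist_nonneg {S : Type*} (V : Ω → S) (s : S) : 0 ≤ rvDist μ V s := ENNReal.toReal_nonneg

lemma shannonEntropy_eq_distEnt {S : Type*} [Fintype S] (V : Ω → S) :
    shannonEntropy μ V = distEnt (rvDist μ V) := by
  rw [shannonEntropy, distEnt]
  simp [Real.negMulLog, rvDist, Finset.sum_neg_distrib]

lemma sum_rvDist {S : Type*} [Fintype S] (V : Ω → S)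
    (hV : ∀ s : S, MeasurableSet (V ⁻¹' {s})) : ∑ s, rvDist μ V s = 1 := by
  simp only [rvDist]
  rw [← ENNReal.toReal_sum (fun s _ => measure_ne_top μ _)]
  rw [MeasureTheory.sum_measure_preimage_singleton Finset.univ (fun s _ => hV s)]
  simp

lemma rvDist_comp {S S' : Type*} [Fintype S] [Fintype S'] [DecidableEq S'] (V : Ω → S)
    (hV : ∀ s : S, MeasurableSet (V ⁻¹' {s})) (φ : S → S') :
    rvDist μ (fun ω => φ (V ω)) = push φ (rvDist μ V) := by
  funext a
  rw [rvDist, push]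
  have hset : (fun ω => φ (V ω)) ⁻¹' {a}
      = V ⁻¹' ↑(univ.filter (fun s => φ s = a)) := by
    ext ω
    simp
  rw [hset, ← MeasureTheory.sum_measure_preimage_singleton _ (fun s _ => hV s),
    ENNReal.toReal_sum (fun s _ => measure_ne_top μ _)]
  rfl

lemma pair_preimage_measurable {S T : Type*}
    [MeasurableSpace S] [DiscreteMeasurableSpace S]
    [MeasurableSpace T] [DiscreteMeasurableSpace T]
    {U : Ω → S} {V : Ω → T} (hU : Measurable U) (hV : Measurable V) :
    ∀ z : S × T, MeasurableSet ((fun ω => (U ω, V ω)) ⁻¹' {z}) := by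
  intro z
  have : ({z} : Set (S × T)) = {z.1} ×ˢ {z.2} := by
    rw [Set.singleton_prod_singleton]
  rw [this]
  exact (hU.prodMk hV) (MeasurableSet.of_discrete.prod MeasurableSet.of_discrete)

lemma mutualInfo_eq_Ifun {S T : Type*} [Fintype S] [Fintype T]
    [MeasurableSpace S] [DiscreteMeasurableSpace S]
    [MeasurableSpace T] [DiscreteMeasurableSpace T]
    [DecidableEq S] [DecidableEq T]
    (U : Ω → S) (V : Ω → T) (hU : Measurable U) (hV : Measurable V) :
    mutualInfo μ U V = Ifun (rvDist μ (fun ω => (U ω, V ω))) := by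
  have hpair := pair_preimage_measurable hU hV
  have hfst : rvDist μ U = push Prod.fst (rvDist μ (fun ω => (U ω, V ω))) := by
    rw [← rvDist_comp μ _ hpair Prod.fst]
  have hsnd : rvDist μ V = push Prod.snd (rvDist μ (fun ω => (U ω, V ω))) := by
    rw [← rvDist_comp μ _ hpair Prod.snd]
  rw [mutualInfo, Ifun, shannonEntropy_eq_distEnt, shannonEntropy_eq_distEnt,
    shannonEntropy_eq_distEnt, hfst, hsnd]

end MeasureGlue

/-- **Corollary 3 (Discretization tightens the bound).** For any deterministic quantizer
`q : 𝒜 → 𝒜q`, Theorem 1 applied to the quantized policy `q ∘ π` gives a budget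
`H[q ∘ A⋆] + I[X : X̃] ≤ log |𝒜q| + I[X : X̃]`. -/
theorem discretization_tightens_bound
    {Ω : Type*} [MeasurableSpace Ω] (μ : Measure Ω) [IsProbabilityMeasure μ]
    {𝒳 𝒜 𝒜q 𝒟 : Type*} [Fintype 𝒳] [Fintype 𝒜] [Fintype 𝒜q] [Fintype 𝒟]
    [MeasurableSpace 𝒳] [DiscreteMeasurableSpace 𝒳]
    [MeasurableSpace 𝒜] [DiscreteMeasurableSpace 𝒜]
    [MeasurableSpace 𝒜q] [DiscreteMeasurableSpace 𝒜q]
    [MeasurableSpace 𝒟] [DiscreteMeasurableSpace 𝒟]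
    (X Xtil : Ω → 𝒳) (δ : Ω → 𝒟) (Astar : Ω → 𝒜)
    (hX : Measurable X) (hXtil : Measurable Xtil) (hδ : Measurable δ)
    (hAstar : Measurable Astar)
    (π : 𝒳 → 𝒜) (q : 𝒜 → 𝒜q) :
    mutualInfo μ (q ∘ Astar) (q ∘ π ∘ X)
        + (mutualInfo μ (q ∘ π ∘ X) (q ∘ π ∘ Xtil) - mutualInfo μ (q ∘ π ∘ X) δ)
      ≤ shannonEntropy μ (q ∘ Astar) + mutualInfo μ X Xtil
    ∧ shannonEntropy μ (q ∘ Astar) + mutualInfo μ X Xtil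
      ≤ Real.log (Fintype.card 𝒜q) + mutualInfo μ X Xtil := by
  classical
  set h : 𝒳 → 𝒜q := fun x => q (π x) with hh
  -- measurability
  have hqA : Measurable (q ∘ Astar) := Measurable.of_discrete.comp hAstar
  have hhX : Measurable (q ∘ π ∘ X) := Measurable.of_discrete.comp (Measurable.of_discrete.comp hX)
  have hhXt : Measurable (q ∘ π ∘ Xtil) := Measurable.of_discrete.comp (Measurable.of_discrete.comp hXtil)
  -- distributions
  set w := rvDist μ (fun ω => (X ω, Xtil ω)) with hw
  have hwnn : ∀ z, 0 ≤ w z := fun z => rvDist_nonneg μ _ z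
  -- Part 2 inequality: H[q∘A⋆] ≤ log |𝒜q|
  have hmax : shannonEntropy μ (q ∘ Astar) ≤ Real.log (Fintype.card 𝒜q) := by
    rw [shannonEntropy_eq_distEnt]
    refine distEnt_le_log_card _ (fun s => rvDist_nonneg μ _ s) ?_
    exact sum_rvDist μ _ (fun s => hqA (MeasurableSet.of_discrete))
  -- I[q∘A⋆ : q∘π∘X] ≤ H[q∘A⋆]
  have hI1 : mutualInfo μ (q ∘ Astar) (q ∘ π ∘ X) ≤ shannonEntropy μ (q ∘ Astar) := by
    rw [mutualInfo]
    have hpair := pair_preimage_measurable hqA hhX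
    have hsnd : rvDist μ (q ∘ π ∘ X)
        = push Prod.snd (rvDist μ (fun ω => ((q ∘ Astar) ω, (q ∘ π ∘ X) ω))) := by
      rw [← rvDist_comp μ _ hpair Prod.snd]
    have : shannonEntropy μ (q ∘ π ∘ X)
        ≤ shannonEntropy μ (fun ω => ((q ∘ Astar) ω, (q ∘ π ∘ X) ω)) := by
      rw [shannonEntropy_eq_distEnt, shannonEntropy_eq_distEnt, hsnd]
      exact distEnt_push_le (fun z => rvDist_nonneg μ _ z)
    linarith
  -- data processing: I[q∘π∘X : q∘π∘Xtil] ≤ I[X : Xtil]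
  have hI2 : mutualInfo μ (q ∘ π ∘ X) (q ∘ π ∘ Xtil) ≤ mutualInfo μ X Xtil := by
    rw [mutualInfo_eq_Ifun μ _ _ hhX hhXt, mutualInfo_eq_Ifun μ _ _ hX hXtil]
    have hpairXX := pair_preimage_measurable hX hXtil
    have heq : rvDist μ (fun ω => ((q ∘ π ∘ X) ω, (q ∘ π ∘ Xtil) ω))
        = push (Prod.map h h) w := by
      rw [hw, ← rvDist_comp μ _ hpairXX (Prod.map h h)]
      rfl
    rw [heq, ← hw]
    exact Ifun_push_le h h w hwnn
  -- nonnegativity: 0 ≤ I[q∘π∘X : δ]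
  have hI3 : 0 ≤ mutualInfo μ (q ∘ π ∘ X) δ := by
    rw [mutualInfo_eq_Ifun μ _ _ hhX hδ]
    refine Ifun_nonneg _ (fun z => rvDist_nonneg μ _ z) ?_
    exact sum_rvDist μ _ (pair_preimage_measurable hhX hδ)
  constructor
  · linarith
  · linarith
end

section
/- Let (Ω, μ) be a probability space, let 𝒳, 𝒜, 𝒜q, 𝒟 be finite types, let X, X̃ : Ω → 𝒳, δ : Ω → 𝒟, A⋆ : Ω → 𝒜 be measurable random variables, let π : 𝒳 → 𝒜 be any function, and let da : ℕ, R > 0, and 0 < s ≤ 2R be given. If qz : 𝒜 → 𝒜q is a quantizer whose codomain satisfies Fintype.card 𝒜q ≤ (2R / s)^{da}, then I[qz ∘ A⋆ : qz ∘ π ∘ X] + ( I[qz ∘ π ∘ X : qz ∘ π ∘ X̃] − I[qz ∘ π ∘ X : δ] ) ≤ da * Real.log (2R / s) + I[X : X̃]. -/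
open MeasureTheory ProbabilityTheory

/-!
Everything reduces to the log-sum inequality, i.e. Jensen's inequality for `x log x`. Writing
`I[X : Y]` as the relative entropy of the joint law against the product of the marginals, the
log-sum inequality applied on the fibres of `Prod.map f g` gives the data-processing inequality
`I[f ∘ X : g ∘ Y] ≤ I[X : Y]`, and applied to the whole space it gives `I[X : Y] ≥ 0`; against the
counting measure it gives `H[X] ≤ log |S|`. Hence the capability term is at most
`H[qz ∘ A⋆] ≤ log |𝒜q| ≤ da log (2R/s)`, the robustness term is at most `I[X : X̃]` by data
processing through `qz ∘ π`, and the subtracted term `I[qz ∘ π ∘ X : δ]` is nonnegative.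
-/

section LogSum

open Real Finset

theorem Real.sum_mul_log_div_sum_le {ι : Type*} (s : Finset ι) {a b : ι → ℝ}
    (ha : ∀ i ∈ s, 0 ≤ a i) (hb : ∀ i ∈ s, 0 ≤ b i) (hab : ∀ i ∈ s, b i = 0 → a i = 0) :
    (∑ i ∈ s, a i) * log ((∑ i ∈ s, a i) / ∑ i ∈ s, b i) ≤ ∑ i ∈ s, a i * log (a i / b i) := by
  have hcancel : ∀ i ∈ s, b i * (a i / b i) = a i := fun i hi => by
    rcases eq_or_ne (b i) 0 with h | h
    · simp [h, hab i hi h]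
    · exact mul_div_cancel₀ _ h
  rcases (sum_nonneg hb).eq_or_lt with hB | hB
  · have ha0 : ∀ i ∈ s, a i = 0 := fun i hi =>
      hab i hi ((sum_eq_zero_iff_of_nonneg hb).1 hB.symm i hi)
    rw [sum_eq_zero ha0, zero_mul]
    exact (sum_eq_zero fun i hi => by rw [ha0 i hi, zero_mul]).ge
  set A := ∑ i ∈ s, a i
  set B := ∑ i ∈ s, b i
  -- Jensen for the convex function `x log x`, at the points `a i / b i` with weights `b i / B`
  have jensen := convexOn_mul_log.map_sum_le (t := s) (w := fun i => b i / B)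
    (p := fun i => a i / b i) (fun i hi => div_nonneg (hb i hi) hB.le)
    (by rw [← sum_div, div_self hB.ne']) (fun i hi => div_nonneg (ha i hi) (hb i hi))
  simp only [smul_eq_mul] at jensen
  have hmean : ∑ i ∈ s, b i / B * (a i / b i) = A / B := by
    rw [sum_div]
    refine sum_congr rfl fun i hi => ?_
    rw [div_mul_eq_mul_div, hcancel i hi]
  have hterm : ∀ i ∈ s, b i / B * (a i / b i * log (a i / b i)) = a i * log (a i / b i) / B :=
    fun i hi => by rw [← mul_assoc, div_mul_eq_mul_div, hcancel i hi, div_mul_eq_mul_div]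
  rw [hmean, sum_congr rfl hterm, ← sum_div, le_div_iff₀ hB] at jensen
  calc A * log (A / B) = A / B * log (A / B) * B := by rw [mul_right_comm, div_mul_cancel₀ A hB.ne']
    _ ≤ _ := jensen

theorem Real.sum_mul_log_div_fiberwise_le {ι κ : Type*} [Fintype ι] [Fintype κ] [DecidableEq κ]
    (g : ι → κ) {a b : ι → ℝ} (ha : ∀ i, 0 ≤ a i) (hb : ∀ i, 0 ≤ b i)
    (hab : ∀ i, b i = 0 → a i = 0) :
    ∑ k, (∑ i with g i = k, a i) * log ((∑ i with g i = k, a i) / ∑ i with g i = k, b i)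
      ≤ ∑ i, a i * log (a i / b i) := by
  rw [← sum_fiberwise univ g]
  gcongr with k
  exact sum_mul_log_div_sum_le _ (fun i _ => ha i) (fun i _ => hb i) (fun i _ => hab i)

theorem Real.sum_mul_log_le_sum_mul_log_sum {ι : Type*} (s : Finset ι) {a : ι → ℝ}
    (ha : ∀ i ∈ s, 0 ≤ a i) :
    ∑ i ∈ s, a i * log (a i) ≤ (∑ i ∈ s, a i) * log (∑ i ∈ s, a i) := by
  rw [sum_mul]
  refine sum_le_sum fun i hi => ?_
  rcases (ha i hi).eq_or_lt with h | h
  · simp [← h]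
  · exact mul_le_mul_of_nonneg_left (log_le_log h (single_le_sum ha hi)) h.le

end LogSum

section Entropy

open Real Finset

variable {Ω : Type*} [MeasurableSpace Ω] {μ : Measure Ω}

variable (μ) in
noncomputable def probMass {S : Type*} (X : Ω → S) (s : S) : ℝ := μ.real (X ⁻¹' {s})

theorem probMass_nonneg {S : Type*} (X : Ω → S) (s : S) : 0 ≤ probMass μ X s :=
  measureReal_nonneg

theorem probMass_pair_le_fst [IsFiniteMeasure μ] {S T : Type*} (X : Ω → S) (Y : Ω → T)
    (z : S × T) : probMass μ (fun ω => (X ω, Y ω)) z ≤ probMass μ X z.1 :=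
  measureReal_mono fun ω hω => by simp_all [Prod.ext_iff]

theorem probMass_pair_le_snd [IsFiniteMeasure μ] {S T : Type*} (X : Ω → S) (Y : Ω → T)
    (z : S × T) : probMass μ (fun ω => (X ω, Y ω)) z ≤ probMass μ Y z.2 :=
  measureReal_mono fun ω hω => by simp_all [Prod.ext_iff]

theorem probMass_pair_eq_zero_of_mul_eq_zero [IsFiniteMeasure μ] {S T : Type*} {X : Ω → S}
    {Y : Ω → T} (z : S × T) (h : probMass μ X z.1 * probMass μ Y z.2 = 0) :
    probMass μ (fun ω => (X ω, Y ω)) z = 0 := by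
  rcases mul_eq_zero.1 h with h | h
  · exact le_antisymm (h ▸ probMass_pair_le_fst X Y z) (probMass_nonneg _ z)
  · exact le_antisymm (h ▸ probMass_pair_le_snd X Y z) (probMass_nonneg _ z)

theorem shannonEntropy_eq {S : Type*} [Fintype S] (X : Ω → S) :
    shannonEntropy μ X = -∑ s, probMass μ X s * log (probMass μ X s) := rfl

theorem probMass_comp [IsFiniteMeasure μ] {S T : Type*} [Fintype S] [MeasurableSpace S]
    [MeasurableSingletonClass S] [DecidableEq T] {W : Ω → S} (hW : Measurable W) (g : S → T)
    (t : T) : probMass μ (g ∘ W) t = ∑ s with g s = t, probMass μ W s := by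
  unfold probMass
  rw [sum_measureReal_preimage_singleton _ fun s _ => hW (measurableSet_singleton s)]
  congr 1
  ext ω
  simp

theorem sum_probMass [IsProbabilityMeasure μ] {S : Type*} [Fintype S] [MeasurableSpace S]
    [MeasurableSingletonClass S] {X : Ω → S} (hX : Measurable X) : ∑ s, probMass μ X s = 1 := by
  unfold probMass
  rw [sum_measureReal_preimage_singleton _ fun s _ => hX (measurableSet_singleton s)]
  simp

theorem sum_probMass_mul_comp [IsFiniteMeasure μ] {S T : Type*} [Fintype S] [MeasurableSpace S]
    [MeasurableSingletonClass S] [Fintype T] {W : Ω → S} (hW : Measurable W) (g : S → T)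
    (F : T → ℝ) : ∑ s, probMass μ W s * F (g s) = ∑ t, probMass μ (g ∘ W) t * F t := by
  classical
  rw [← sum_fiberwise univ g]
  refine sum_congr rfl fun t _ => ?_
  rw [probMass_comp hW, sum_mul]
  exact sum_congr rfl fun s hs => by rw [(mem_filter.1 hs).2]

theorem shannonEntropy_comp_le [IsFiniteMeasure μ] {S T : Type*} [Fintype S] [MeasurableSpace S]
    [MeasurableSingletonClass S] [Fintype T] {W : Ω → S} (hW : Measurable W) (g : S → T) :
    shannonEntropy μ (g ∘ W) ≤ shannonEntropy μ W := by
  classical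
  rw [shannonEntropy_eq, shannonEntropy_eq, neg_le_neg_iff, ← sum_fiberwise univ g]
  refine sum_le_sum fun t _ => ?_
  rw [probMass_comp hW]
  exact sum_mul_log_le_sum_mul_log_sum _ fun s _ => probMass_nonneg W s

theorem shannonEntropy_le_log_card [IsProbabilityMeasure μ] {S : Type*} [Fintype S]
    [MeasurableSpace S] [MeasurableSingletonClass S] {X : Ω → S} (hX : Measurable X) :
    shannonEntropy μ X ≤ log (Fintype.card S) := by
  have h := sum_mul_log_div_sum_le univ (a := probMass μ X) (b := fun _ => 1)
    (fun s _ => probMass_nonneg X s) (fun _ _ => zero_le_one) (fun _ _ h => absurd h one_ne_zero)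
  simp only [sum_probMass hX, sum_const, card_univ, nsmul_eq_mul, mul_one, div_one, one_mul,
    one_div, log_inv] at h
  rw [shannonEntropy_eq]
  linarith

end Entropy

section MutualInfo

open Real Finset

variable {Ω S T : Type*} [MeasurableSpace Ω] {μ : Measure Ω}
  [Fintype S] [MeasurableSpace S] [MeasurableSingletonClass S]
  [Fintype T] [MeasurableSpace T] [MeasurableSingletonClass T]
  {X : Ω → S} {Y : Ω → T}

theorem mutualInfo_eq_sum_mul_log_div [IsFiniteMeasure μ] (hX : Measurable X)
    (hY : Measurable Y) :
    mutualInfo μ X Y = ∑ z, probMass μ (fun ω => (X ω, Y ω)) z *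
      log (probMass μ (fun ω => (X ω, Y ω)) z / (probMass μ X z.1 * probMass μ Y z.2)) := by
  set P := probMass μ (fun ω => (X ω, Y ω))
  have hsplit : ∀ z, P z * log (P z / (probMass μ X z.1 * probMass μ Y z.2)) =
      P z * log (P z) - P z * log (probMass μ X z.1) - P z * log (probMass μ Y z.2) := by
    intro z
    rcases (show 0 ≤ P z from probMass_nonneg _ z).eq_or_lt with hz | hz
    · simp [← hz]
    have hX0 := (hz.trans_le (probMass_pair_le_fst X Y z)).ne'
    have hY0 := (hz.trans_le (probMass_pair_le_snd X Y z)).ne'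
    rw [log_div hz.ne' (mul_ne_zero hX0 hY0), log_mul hX0 hY0]
    ring
  have hfst : ∑ z, P z * log (probMass μ X z.1) = ∑ x, probMass μ X x * log (probMass μ X x) :=
    sum_probMass_mul_comp (hX.prodMk hY) Prod.fst fun x => log (probMass μ X x)
  have hsnd : ∑ z, P z * log (probMass μ Y z.2) = ∑ y, probMass μ Y y * log (probMass μ Y y) :=
    sum_probMass_mul_comp (hX.prodMk hY) Prod.snd fun y => log (probMass μ Y y)
  rw [sum_congr rfl fun z _ => hsplit z, sum_sub_distrib, sum_sub_distrib, hfst, hsnd, mutualInfo,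
    shannonEntropy_eq X, shannonEntropy_eq Y, shannonEntropy_eq (fun ω => (X ω, Y ω))]
  ring

theorem mutualInfo_nonneg [IsProbabilityMeasure μ] (hX : Measurable X) (hY : Measurable Y) :
    0 ≤ mutualInfo μ X Y := by
  have h := sum_mul_log_div_sum_le univ (fun z _ => probMass_nonneg _ z)
    (fun z _ => mul_nonneg (probMass_nonneg X z.1) (probMass_nonneg Y z.2))
    (fun z _ => probMass_pair_eq_zero_of_mul_eq_zero (μ := μ) z)
  have hprod : ∑ z : S × T, probMass μ X z.1 * probMass μ Y z.2 = 1 := by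
    rw [Fintype.sum_prod_type, ← sum_mul_sum, sum_probMass hX, sum_probMass hY, one_mul]
  rw [hprod, sum_probMass (hX.prodMk hY)] at h
  simpa [mutualInfo_eq_sum_mul_log_div hX hY] using h

theorem mutualInfo_le_shannonEntropy_fst [IsFiniteMeasure μ] (hX : Measurable X)
    (hY : Measurable Y) : mutualInfo μ X Y ≤ shannonEntropy μ X := by
  have h : shannonEntropy μ Y ≤ shannonEntropy μ (fun ω => (X ω, Y ω)) :=
    shannonEntropy_comp_le (hX.prodMk hY) Prod.snd
  rw [mutualInfo]
  linarith

theorem mutualInfo_comp_le [IsFiniteMeasure μ] {S' T' : Type*} [Fintype S'] [MeasurableSpace S']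
    [MeasurableSingletonClass S'] [Fintype T'] [MeasurableSpace T'] [MeasurableSingletonClass T']
    (hX : Measurable X) (hY : Measurable Y) (f : S → S') (g : T → T') :
    mutualInfo μ (f ∘ X) (g ∘ Y) ≤ mutualInfo μ X Y := by
  classical
  have hP : ∀ z', probMass μ (fun ω => ((f ∘ X) ω, (g ∘ Y) ω)) z' =
      ∑ z with Prod.map f g z = z', probMass μ (fun ω => (X ω, Y ω)) z :=
    probMass_comp (hX.prodMk hY) (Prod.map f g)
  have hQ : ∀ z' : S' × T', probMass μ (f ∘ X) z'.1 * probMass μ (g ∘ Y) z'.2 =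
      ∑ z with Prod.map f g z = z', probMass μ X z.1 * probMass μ Y z.2 := by
    rintro ⟨s', t'⟩
    rw [probMass_comp hX, probMass_comp hY, sum_mul_sum, ← sum_product']
    congr 1
    ext z
    simp [Prod.ext_iff]
  rw [mutualInfo_eq_sum_mul_log_div ((measurable_of_finite f).comp hX)
    ((measurable_of_finite g).comp hY), mutualInfo_eq_sum_mul_log_div hX hY]
  simp only [hP, hQ]
  exact sum_mul_log_div_fiberwise_le _ (fun z => probMass_nonneg _ z)
    (fun z => mul_nonneg (probMass_nonneg X z.1) (probMass_nonneg Y z.2))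
    (fun z => probMass_pair_eq_zero_of_mul_eq_zero (μ := μ) z)

end MutualInfo

theorem continuous_action_bound_general
    {Ω : Type*} [MeasurableSpace Ω] (μ : Measure Ω) [IsProbabilityMeasure μ]
    {𝒳 𝒜 𝒜q 𝒟 : Type*} [Fintype 𝒳] [Fintype 𝒜q] [Fintype 𝒟]
    [MeasurableSpace 𝒳] [DiscreteMeasurableSpace 𝒳]
    [MeasurableSpace 𝒜] [DiscreteMeasurableSpace 𝒜]
    [MeasurableSpace 𝒜q] [DiscreteMeasurableSpace 𝒜q]
    [MeasurableSpace 𝒟] [DiscreteMeasurableSpace 𝒟]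
    (X Xtil : Ω → 𝒳) (δ : Ω → 𝒟) (Astar : Ω → 𝒜)
    (hX : Measurable X) (hXtil : Measurable Xtil) (hδ : Measurable δ)
    (hAstar : Measurable Astar)
    (π : 𝒳 → 𝒜)
    (da : ℕ) (R s : ℝ)
    (qz : 𝒜 → 𝒜q)
    (hcard : (Fintype.card 𝒜q : ℝ) ≤ (2 * R / s) ^ da) :
    mutualInfo μ (qz ∘ Astar) (qz ∘ π ∘ X)
        + (mutualInfo μ (qz ∘ π ∘ X) (qz ∘ π ∘ Xtil) - mutualInfo μ (qz ∘ π ∘ X) δ)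
      ≤ da * Real.log (2 * R / s) + mutualInfo μ X Xtil := by
  have hA : Measurable (qz ∘ Astar) := Measurable.of_discrete.comp hAstar
  have hB : Measurable (qz ∘ π ∘ X) := (Measurable.of_discrete (f := qz ∘ π)).comp hX
  have : Nonempty 𝒜q := (nonempty_of_isProbabilityMeasure μ).map (qz ∘ Astar)
  have hcapacity : mutualInfo μ (qz ∘ Astar) (qz ∘ π ∘ X) ≤ da * Real.log (2 * R / s) :=
    calc _ ≤ shannonEntropy μ (qz ∘ Astar) := mutualInfo_le_shannonEntropy_fst hA hB
      _ ≤ Real.log (Fintype.card 𝒜q) := shannonEntropy_le_log_card hA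
      _ ≤ Real.log ((2 * R / s) ^ da) := Real.log_le_log (by exact_mod_cast Fintype.card_pos) hcard
      _ = da * Real.log (2 * R / s) := Real.log_pow _ _
  have hrobust : mutualInfo μ (qz ∘ π ∘ X) (qz ∘ π ∘ Xtil) ≤ mutualInfo μ X Xtil :=
    mutualInfo_comp_le hX hXtil (qz ∘ π) (qz ∘ π)
  have hnuisance : 0 ≤ mutualInfo μ (qz ∘ π ∘ X) δ := mutualInfo_nonneg hB hδ
  linarith

/-- **Corollary 4 (Continuous-action VLAs).** If the quantizer codomain satisfies
`|𝒜q| ≤ (2R/s)^da`, then the quantized policy obeys the Capability–Robustness bound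
with budget `da · log(2R/s) + I[X : X̃]`. -/
theorem continuous_action_bound
    {Ω : Type*} [MeasurableSpace Ω] (μ : Measure Ω) [IsProbabilityMeasure μ]
    {𝒳 𝒜 𝒜q 𝒟 : Type*} [Fintype 𝒳] [Fintype 𝒜] [Fintype 𝒜q] [Fintype 𝒟]
    [MeasurableSpace 𝒳] [DiscreteMeasurableSpace 𝒳]
    [MeasurableSpace 𝒜] [DiscreteMeasurableSpace 𝒜]
    [MeasurableSpace 𝒜q] [DiscreteMeasurableSpace 𝒜q]
    [MeasurableSpace 𝒟] [DiscreteMeasurableSpace 𝒟]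
    (X Xtil : Ω → 𝒳) (δ : Ω → 𝒟) (Astar : Ω → 𝒜)
    (hX : Measurable X) (hXtil : Measurable Xtil) (hδ : Measurable δ)
    (hAstar : Measurable Astar)
    (π : 𝒳 → 𝒜)
    (da : ℕ) (R s : ℝ) (hR : 0 < R) (hs : 0 < s) (hs2R : s ≤ 2 * R)
    (qz : 𝒜 → 𝒜q)
    (hcard : (Fintype.card 𝒜q : ℝ) ≤ (2 * R / s) ^ da) :
    mutualInfo μ (qz ∘ Astar) (qz ∘ π ∘ X)
        + (mutualInfo μ (qz ∘ π ∘ X) (qz ∘ π ∘ Xtil) - mutualInfo μ (qz ∘ π ∘ X) δ)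
      ≤ da * Real.log (2 * R / s) + mutualInfo μ X Xtil :=
  continuous_action_bound_general μ X Xtil δ Astar hX hXtil hδ hAstar π da R s qz hcard
end

section
/- Let (Ω, μ) be a probability space, let 𝒳, 𝒜, 𝒜⋆, 𝒟, ℋ be finite types, let X, X̃ : Ω → 𝒳, δ : Ω → 𝒟, A⋆ : Ω → 𝒜⋆, and H : Ω → ℋ be measurable random variables, let π : 𝒳 × ℋ → 𝒜 be any function, and set Aπ(ω) = π(X ω, H ω) and Ãπ(ω) = π(X̃ ω, H ω). Then I[A⋆ : Aπ | H] + ( I[Aπ : Ãπ | H] − I[Aπ : δ | H] ) ≤ H[A⋆ | H] + I[X : X̃ | H], where I[· : · | H] denotes conditional mutual information and H[· | H] conditional entropy. -/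
open MeasureTheory ProbabilityTheory

section Aux

variable {Ω : Type*} [MeasurableSpace Ω] (μ : Measure Ω) [IsProbabilityMeasure μ]

/-- Gibbs-type inequality. -/
lemma gibbs_aux {ι : Type*} [Fintype ι] (p q : ι → ℝ)
    (hp : ∀ i, 0 ≤ p i) (hq : ∀ i, 0 ≤ q i) (hpq : ∀ i, p i ≠ 0 → 0 < q i)
    (hsum : ∑ i, q i ≤ ∑ i, p i) :
    ∑ i, p i * Real.log (q i) ≤ ∑ i, p i * Real.log (p i) := by
  have key : ∀ i, p i * Real.log (q i) - p i * Real.log (p i) ≤ q i - p i := by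
    intro i
    rcases eq_or_lt_of_le (hp i) with h0 | h0
    · simp [← h0]; exact hq i
    · have hqi := hpq i (ne_of_gt h0)
      have : Real.log (q i) - Real.log (p i) = Real.log (q i / p i) := by
        rw [Real.log_div (ne_of_gt hqi) (ne_of_gt h0)]
      calc p i * Real.log (q i) - p i * Real.log (p i)
          = p i * Real.log (q i / p i) := by rw [← this]; ring
        _ ≤ p i * (q i / p i - 1) := by
            apply mul_le_mul_of_nonneg_left _ (le_of_lt h0)
            exact Real.log_le_sub_one_of_pos (div_pos hqi h0)
        _ = q i - p i := by field_simp
  have h2 : ∑ i, (p i * Real.log (q i) - p i * Real.log (p i)) ≤ ∑ i, (q i - p i) :=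
    Finset.sum_le_sum fun i _ => key i
  rw [Finset.sum_sub_distrib, Finset.sum_sub_distrib] at h2
  linarith

variable {T : Type*} [Fintype T] [MeasurableSpace T] [MeasurableSingletonClass T]

/-- Fiber decomposition of the preimage measure under a post-composition. -/
lemma meas_comp_preimage {U : Type*} [DecidableEq U]
    (Y : Ω → T) (hY : Measurable Y) (f : T → U) (u : U) :
    (μ ((fun ω => f (Y ω)) ⁻¹' {u})).toReal
      = ∑ t ∈ Finset.univ.filter (fun t => f t = u), (μ (Y ⁻¹' {t})).toReal := by
  have hset : (fun ω => f (Y ω)) ⁻¹' {u}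
      = ⋃ t ∈ Finset.univ.filter (fun t => f t = u), Y ⁻¹' {t} := by
    ext ω
    simp [Set.mem_preimage, eq_comm]
  rw [hset, measure_biUnion_finset]
  · exact ENNReal.toReal_sum (fun t _ => measure_ne_top μ _)
  · intro s _ t _ hst
    exact Set.disjoint_left.2 fun ω hs ht => hst (by
      simp only [Set.mem_preimage, Set.mem_singleton_iff] at hs ht
      rw [← hs, ← ht])
  · intro t _
    exact hY (measurableSet_singleton t)

lemma sum_pr_eq_one (Y : Ω → T) (hY : Measurable Y) :
    ∑ t : T, (μ (Y ⁻¹' {t})).toReal = 1 := by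
  have h1 : μ (⋃ t ∈ (Finset.univ : Finset T), Y ⁻¹' {t}) = ∑ t : T, μ (Y ⁻¹' {t}) := by
    apply measure_biUnion_finset
    · intro s _ t _ hst
      exact Set.disjoint_left.2 fun ω hs ht => hst (by
        simp only [Set.mem_preimage, Set.mem_singleton_iff] at hs ht
        rw [← hs, ← ht])
    · intro t _
      exact hY (measurableSet_singleton t)
  have h2 : (⋃ t ∈ (Finset.univ : Finset T), Y ⁻¹' {t}) = Set.univ := by ext ω; simp
  rw [h2, measure_univ] at h1
  rw [← ENNReal.toReal_sum (fun t _ => measure_ne_top μ _), ← h1]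
  rfl

lemma pr_le_comp {U : Type*} [DecidableEq U] (Y : Ω → T) (hY : Measurable Y) (f : T → U) (t : T) :
    (μ (Y ⁻¹' {t})).toReal ≤ (μ ((fun ω => f (Y ω)) ⁻¹' {f t})).toReal := by
  rw [meas_comp_preimage μ Y hY f (f t)]
  exact Finset.single_le_sum (f := fun t => (μ (Y ⁻¹' {t})).toReal)
    (fun s _ => ENNReal.toReal_nonneg) (by simp)

/-- Entropy of a post-composition, written as a sum over the base variable. -/
lemma shannonEntropy_comp_eq {U : Type*} [Fintype U] [DecidableEq U]
    (Y : Ω → T) (hY : Measurable Y) (f : T → U) :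
    shannonEntropy μ (fun ω => f (Y ω))
      = - ∑ t : T, (μ (Y ⁻¹' {t})).toReal
          * Real.log ((μ ((fun ω => f (Y ω)) ⁻¹' {f t})).toReal) := by
  unfold shannonEntropy
  congr 1
  calc ∑ u : U, (μ ((fun ω => f (Y ω)) ⁻¹' {u})).toReal
          * Real.log ((μ ((fun ω => f (Y ω)) ⁻¹' {u})).toReal)
      = ∑ u : U, ∑ t ∈ Finset.univ.filter (fun t => f t = u),
          (μ (Y ⁻¹' {t})).toReal * Real.log ((μ ((fun ω => f (Y ω)) ⁻¹' {u})).toReal) := by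
        refine Finset.sum_congr rfl fun u _ => ?_
        rw [meas_comp_preimage μ Y hY f u, Finset.sum_mul]
    _ = ∑ u : U, ∑ t ∈ Finset.univ.filter (fun t => f t = u),
          (μ (Y ⁻¹' {t})).toReal * Real.log ((μ ((fun ω => f (Y ω)) ⁻¹' {f t})).toReal) := by
        refine Finset.sum_congr rfl fun u _ => Finset.sum_congr rfl fun t ht => ?_
        rw [(Finset.mem_filter.1 ht).2]
    _ = _ := Finset.sum_fiberwise _ f _

lemma shannonEntropy_comp_le_s8 {U : Type*} [Fintype U] [DecidableEq U]
    (Y : Ω → T) (hY : Measurable Y) (f : T → U) :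
    shannonEntropy μ (fun ω => f (Y ω)) ≤ shannonEntropy μ Y := by
  rw [shannonEntropy_comp_eq μ Y hY f]
  unfold shannonEntropy
  rw [neg_le_neg_iff]
  refine Finset.sum_le_sum fun t _ => ?_
  rcases eq_or_lt_of_le (ENNReal.toReal_nonneg : 0 ≤ (μ (Y ⁻¹' {t})).toReal) with h0 | h0
  · simp [← h0]
  · refine mul_le_mul_of_nonneg_left (Real.log_le_log h0 ?_) (le_of_lt h0)
    exact pr_le_comp μ Y hY f t

lemma shannonEntropy_comp_eq_of_leftInv [DecidableEq T] {U : Type*} [Fintype U] [DecidableEq U]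
    [MeasurableSpace U] [MeasurableSingletonClass U]
    (Y : Ω → T) (hY : Measurable Y) (f : T → U) (hfY : Measurable (fun ω => f (Y ω)))
    (g : U → T) (hgf : ∀ t, g (f t) = t) :
    shannonEntropy μ (fun ω => f (Y ω)) = shannonEntropy μ Y := by
  refine le_antisymm (shannonEntropy_comp_le_s8 μ Y hY f) ?_
  have h := shannonEntropy_comp_le_s8 μ (fun ω => f (Y ω)) hfY g
  have : (fun ω => g (f (Y ω))) = Y := by funext ω; exact hgf (Y ω)
  rwa [this] at h

end Aux

section Submod

variable {Ω : Type*} [MeasurableSpace Ω] (μ : Measure Ω) [IsProbabilityMeasure μ]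

lemma entropy_submodular {S T U : Type*} [Fintype S] [Fintype T] [Fintype U]
    [DecidableEq S] [DecidableEq T] [DecidableEq U]
    [MeasurableSpace S] [MeasurableSingletonClass S]
    [MeasurableSpace T] [MeasurableSingletonClass T]
    [MeasurableSpace U] [MeasurableSingletonClass U]
    (A : Ω → S) (B : Ω → T) (C : Ω → U)
    (hY : Measurable (fun ω => ((A ω, B ω), C ω))) :
    shannonEntropy μ (fun ω => ((A ω, B ω), C ω)) + shannonEntropy μ C
      ≤ shannonEntropy μ (fun ω => (A ω, C ω)) + shannonEntropy μ (fun ω => (B ω, C ω)) := by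
  classical
  set p : (S × T) × U → ℝ := fun v => (μ ((fun ω => ((A ω, B ω), C ω)) ⁻¹' {v})).toReal with hp
  set PAC : S × U → ℝ := fun w => (μ ((fun ω => (A ω, C ω)) ⁻¹' {w})).toReal with hPAC
  set PBC : T × U → ℝ := fun w => (μ ((fun ω => (B ω, C ω)) ⁻¹' {w})).toReal with hPBC
  set PC : U → ℝ := fun c => (μ (C ⁻¹' {c})).toReal with hPC
  have hp0 : ∀ v, 0 ≤ p v := fun v => ENNReal.toReal_nonneg
  have hPAC0 : ∀ w, 0 ≤ PAC w := fun w => ENNReal.toReal_nonneg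
  have hPBC0 : ∀ w, 0 ≤ PBC w := fun w => ENNReal.toReal_nonneg
  have hPC0 : ∀ c, 0 ≤ PC c := fun c => ENNReal.toReal_nonneg
  -- domination of the joint by the marginals
  have hdomAC : ∀ v : (S × T) × U, p v ≤ PAC (v.1.1, v.2) :=
    fun v => pr_le_comp μ _ hY (fun v : (S × T) × U => (v.1.1, v.2)) v
  have hdomBC : ∀ v : (S × T) × U, p v ≤ PBC (v.1.2, v.2) :=
    fun v => pr_le_comp μ _ hY (fun v : (S × T) × U => (v.1.2, v.2)) v
  have hdomC : ∀ v : (S × T) × U, p v ≤ PC v.2 :=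
    fun v => pr_le_comp μ _ hY (fun v : (S × T) × U => v.2) v
  -- entropy formulas
  have hEY : shannonEntropy μ (fun ω => ((A ω, B ω), C ω))
      = - ∑ v : (S × T) × U, p v * Real.log (p v) := rfl
  have hEAC : shannonEntropy μ (fun ω => (A ω, C ω))
      = - ∑ v : (S × T) × U, p v * Real.log (PAC (v.1.1, v.2)) :=
    shannonEntropy_comp_eq μ _ hY (fun v : (S × T) × U => (v.1.1, v.2))
  have hEBC : shannonEntropy μ (fun ω => (B ω, C ω))
      = - ∑ v : (S × T) × U, p v * Real.log (PBC (v.1.2, v.2)) :=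
    shannonEntropy_comp_eq μ _ hY (fun v : (S × T) × U => (v.1.2, v.2))
  have hEC : shannonEntropy μ C
      = - ∑ v : (S × T) × U, p v * Real.log (PC v.2) :=
    shannonEntropy_comp_eq μ _ hY (fun v : (S × T) × U => v.2)
  -- measurability of marginal maps
  have hACmeas : Measurable (fun ω => (A ω, C ω)) :=
    ((measurable_fst.comp measurable_fst).comp hY).prodMk (measurable_snd.comp hY)
  have hBCmeas : Measurable (fun ω => (B ω, C ω)) :=
    ((measurable_snd.comp measurable_fst).comp hY).prodMk (measurable_snd.comp hY)
  have hCmeas : Measurable C := measurable_snd.comp hY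
  -- marginal identities
  have hmargA : ∀ c : U, ∑ a : S, PAC (a, c) = PC c := by
    intro c
    have h1 := meas_comp_preimage μ (fun ω => (A ω, C ω)) hACmeas Prod.snd c
    have h2 : PC c = ∑ w ∈ Finset.univ.filter (fun w : S × U => w.2 = c), PAC w := h1
    rw [h2, Finset.sum_filter, Fintype.sum_prod_type]
    simp
  have hmargB : ∀ c : U, ∑ b : T, PBC (b, c) = PC c := by
    intro c
    have h1 := meas_comp_preimage μ (fun ω => (B ω, C ω)) hBCmeas Prod.snd c
    have h2 : PC c = ∑ w ∈ Finset.univ.filter (fun w : T × U => w.2 = c), PBC w := h1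
    rw [h2, Finset.sum_filter, Fintype.sum_prod_type]
    simp
  -- the comparison density
  set q : (S × T) × U → ℝ := fun v => PAC (v.1.1, v.2) * PBC (v.1.2, v.2) / PC v.2 with hq
  have hq0 : ∀ v, 0 ≤ q v := fun v =>
    div_nonneg (mul_nonneg (hPAC0 _) (hPBC0 _)) (hPC0 _)
  have hpq : ∀ v, p v ≠ 0 → 0 < q v := by
    intro v hv
    have hpv : 0 < p v := lt_of_le_of_ne (hp0 v) (Ne.symm hv)
    exact div_pos (mul_pos (lt_of_lt_of_le hpv (hdomAC v)) (lt_of_lt_of_le hpv (hdomBC v)))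
      (lt_of_lt_of_le hpv (hdomC v))
  have hsump : ∑ v : (S × T) × U, p v = 1 := sum_pr_eq_one μ _ hY
  have hsumq : ∑ v : (S × T) × U, q v ≤ 1 := by
    have key : ∀ c : U, ∑ ab : S × T, q (ab, c) ≤ PC c := by
      intro c
      have hrw : ∑ ab : S × T, q (ab, c)
          = (∑ a : S, PAC (a, c)) * (∑ b : T, PBC (b, c)) / PC c := by
        rw [Fintype.sum_prod_type]
        calc ∑ a : S, ∑ b : T, PAC (a, c) * PBC (b, c) / PC c
            = ∑ a : S, PAC (a, c) * ((∑ b : T, PBC (b, c)) / PC c) := by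
              refine Finset.sum_congr rfl fun a _ => ?_
              rw [← Finset.sum_div, ← Finset.mul_sum, mul_div_assoc]
          _ = (∑ a : S, PAC (a, c)) * ((∑ b : T, PBC (b, c)) / PC c) := by
              rw [← Finset.sum_mul]
          _ = _ := by rw [mul_div_assoc]
      rw [hrw, hmargA c, hmargB c]
      rcases eq_or_lt_of_le (hPC0 c) with h0 | h0
      · rw [← h0]; simp
      · rw [mul_div_assoc, div_self (ne_of_gt h0), mul_one]
    calc ∑ v : (S × T) × U, q v = ∑ c : U, ∑ ab : S × T, q (ab, c) := by
          rw [Fintype.sum_prod_type]; exact Finset.sum_comm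
      _ ≤ ∑ c : U, PC c := Finset.sum_le_sum fun c _ => key c
      _ = 1 := sum_pr_eq_one μ C hCmeas
  have hgibbs : ∑ v : (S × T) × U, p v * Real.log (q v)
      ≤ ∑ v : (S × T) × U, p v * Real.log (p v) :=
    gibbs_aux p q hp0 hq0 hpq (by rw [hsump]; exact hsumq)
  have hlogq : ∑ v : (S × T) × U, p v * Real.log (q v)
      = ∑ v : (S × T) × U, p v * (Real.log (PAC (v.1.1, v.2)) + Real.log (PBC (v.1.2, v.2))
          - Real.log (PC v.2)) := by
    refine Finset.sum_congr rfl fun v _ => ?_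
    rcases eq_or_ne (p v) 0 with h0 | h0
    · rw [h0]; ring
    · have hpv : 0 < p v := lt_of_le_of_ne (hp0 v) (Ne.symm h0)
      have hA' : PAC (v.1.1, v.2) ≠ 0 := ne_of_gt (lt_of_lt_of_le hpv (hdomAC v))
      have hB' : PBC (v.1.2, v.2) ≠ 0 := ne_of_gt (lt_of_lt_of_le hpv (hdomBC v))
      have hC' : PC v.2 ≠ 0 := ne_of_gt (lt_of_lt_of_le hpv (hdomC v))
      congr 1
      rw [hq]
      rw [Real.log_div (mul_ne_zero hA' hB') hC', Real.log_mul hA' hB']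
  have hsplit : ∑ v : (S × T) × U, p v * (Real.log (PAC (v.1.1, v.2))
        + Real.log (PBC (v.1.2, v.2)) - Real.log (PC v.2))
      = (∑ v : (S × T) × U, p v * Real.log (PAC (v.1.1, v.2)))
        + (∑ v : (S × T) × U, p v * Real.log (PBC (v.1.2, v.2)))
        - (∑ v : (S × T) × U, p v * Real.log (PC v.2)) := by
    rw [← Finset.sum_add_distrib, ← Finset.sum_sub_distrib]
    refine Finset.sum_congr rfl fun v _ => ?_
    ring
  rw [hEY, hEAC, hEBC, hEC]
  rw [hlogq, hsplit] at hgibbs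
  linarith

end Submod

/-- **Conditional (per-step) form of Theorem 1.** Conditioning on a history random
variable `Hist`, with `Aπ ω = π (X ω, Hist ω)` and `Ãπ ω = π (X̃ ω, Hist ω)`:
`I[A⋆ : Aπ | H] + (I[Aπ : Ãπ | H] - I[Aπ : δ | H]) ≤ H[A⋆ | H] + I[X : X̃ | H]`. -/
theorem conditional_capability_robustness_bound
    {Ω : Type*} [MeasurableSpace Ω] (μ : Measure Ω) [IsProbabilityMeasure μ]
    {𝒳 𝒜 𝒜s 𝒟 ℋ : Type*} [Fintype 𝒳] [Fintype 𝒜] [Fintype 𝒜s] [Fintype 𝒟] [Fintype ℋ]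
    [MeasurableSpace 𝒳] [DiscreteMeasurableSpace 𝒳]
    [MeasurableSpace 𝒜] [DiscreteMeasurableSpace 𝒜]
    [MeasurableSpace 𝒜s] [DiscreteMeasurableSpace 𝒜s]
    [MeasurableSpace 𝒟] [DiscreteMeasurableSpace 𝒟]
    [MeasurableSpace ℋ] [DiscreteMeasurableSpace ℋ]
    (X Xtil : Ω → 𝒳) (δ : Ω → 𝒟) (Astar : Ω → 𝒜s) (Hist : Ω → ℋ)
    (hX : Measurable X) (hXtil : Measurable Xtil) (hδ : Measurable δ)
    (hAstar : Measurable Astar) (hHist : Measurable Hist)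
    (π : 𝒳 × ℋ → 𝒜) :
    condMutualInfo' μ Astar (fun ω => π (X ω, Hist ω)) Hist
        + (condMutualInfo' μ (fun ω => π (X ω, Hist ω)) (fun ω => π (Xtil ω, Hist ω)) Hist
            - condMutualInfo' μ (fun ω => π (X ω, Hist ω)) δ Hist)
      ≤ condEntropy' μ Astar Hist + condMutualInfo' μ X Xtil Hist := by
  classical
  have hπ : Measurable π := Measurable.of_discrete
  have ha : Measurable (fun ω => π (X ω, Hist ω)) := hπ.comp (hX.prodMk hHist)
  have hat : Measurable (fun ω => π (Xtil ω, Hist ω)) := hπ.comp (hXtil.prodMk hHist)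
  -- F1 : E(Aπ, H) ≤ E((A⋆, Aπ), H)
  have F1 : shannonEntropy μ (fun ω => (π (X ω, Hist ω), Hist ω))
      ≤ shannonEntropy μ (fun ω => ((Astar ω, π (X ω, Hist ω)), Hist ω)) :=
    shannonEntropy_comp_le_s8 μ (fun ω => ((Astar ω, π (X ω, Hist ω)), Hist ω))
      ((hAstar.prodMk ha).prodMk hHist)
      (fun v : (𝒜s × 𝒜) × ℋ => (v.1.2, v.2))
  -- F2 : submodularity for (Aπ, δ, H)
  have F2 : shannonEntropy μ (fun ω => ((π (X ω, Hist ω), δ ω), Hist ω)) + shannonEntropy μ Hist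
      ≤ shannonEntropy μ (fun ω => (π (X ω, Hist ω), Hist ω))
        + shannonEntropy μ (fun ω => (δ ω, Hist ω)) :=
    entropy_submodular μ _ _ _ ((ha.prodMk hδ).prodMk hHist)
  -- F3 : submodularity for (X, Ãπ) given (Aπ, H)
  have F3 : shannonEntropy μ (fun ω => ((X ω, π (Xtil ω, Hist ω)), (π (X ω, Hist ω), Hist ω)))
        + shannonEntropy μ (fun ω => (π (X ω, Hist ω), Hist ω))
      ≤ shannonEntropy μ (fun ω => (X ω, (π (X ω, Hist ω), Hist ω)))
        + shannonEntropy μ (fun ω => (π (Xtil ω, Hist ω), (π (X ω, Hist ω), Hist ω))) :=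
    entropy_submodular μ _ _ _ ((hX.prodMk hat).prodMk (ha.prodMk hHist))
  have F3a : shannonEntropy μ (fun ω => ((X ω, π (Xtil ω, Hist ω)), (π (X ω, Hist ω), Hist ω)))
      = shannonEntropy μ (fun ω => ((X ω, π (Xtil ω, Hist ω)), Hist ω)) :=
    shannonEntropy_comp_eq_of_leftInv μ (fun ω => ((X ω, π (Xtil ω, Hist ω)), Hist ω))
      ((hX.prodMk hat).prodMk hHist)
      (fun v : (𝒳 × 𝒜) × ℋ => (v.1, (π (v.1.1, v.2), v.2)))
      ((hX.prodMk hat).prodMk (ha.prodMk hHist))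
      (fun v => (v.1, v.2.2)) (fun t => rfl)
  have F3b : shannonEntropy μ (fun ω => (X ω, (π (X ω, Hist ω), Hist ω)))
      = shannonEntropy μ (fun ω => (X ω, Hist ω)) :=
    shannonEntropy_comp_eq_of_leftInv μ (fun ω => (X ω, Hist ω)) (hX.prodMk hHist)
      (fun v : 𝒳 × ℋ => (v.1, (π (v.1, v.2), v.2)))
      (hX.prodMk (ha.prodMk hHist))
      (fun v => (v.1, v.2.2)) (fun t => rfl)
  have F3c : shannonEntropy μ (fun ω => ((π (X ω, Hist ω), π (Xtil ω, Hist ω)), Hist ω))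
      = shannonEntropy μ (fun ω => (π (Xtil ω, Hist ω), (π (X ω, Hist ω), Hist ω))) :=
    shannonEntropy_comp_eq_of_leftInv μ
      (fun ω => (π (Xtil ω, Hist ω), (π (X ω, Hist ω), Hist ω)))
      (hat.prodMk (ha.prodMk hHist))
      (fun v : 𝒜 × (𝒜 × ℋ) => ((v.2.1, v.1), v.2.2))
      ((ha.prodMk hat).prodMk hHist)
      (fun w => (w.1.2, (w.1.1, w.2))) (fun t => rfl)
  -- F4 : submodularity for (X, X̃) given (Ãπ, H)
  have F4 : shannonEntropy μ (fun ω => ((X ω, Xtil ω), (π (Xtil ω, Hist ω), Hist ω)))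
        + shannonEntropy μ (fun ω => (π (Xtil ω, Hist ω), Hist ω))
      ≤ shannonEntropy μ (fun ω => (X ω, (π (Xtil ω, Hist ω), Hist ω)))
        + shannonEntropy μ (fun ω => (Xtil ω, (π (Xtil ω, Hist ω), Hist ω))) :=
    entropy_submodular μ _ _ _ ((hX.prodMk hXtil).prodMk (hat.prodMk hHist))
  have F4a : shannonEntropy μ (fun ω => ((X ω, Xtil ω), (π (Xtil ω, Hist ω), Hist ω)))
      = shannonEntropy μ (fun ω => ((X ω, Xtil ω), Hist ω)) :=
    shannonEntropy_comp_eq_of_leftInv μ (fun ω => ((X ω, Xtil ω), Hist ω))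
      ((hX.prodMk hXtil).prodMk hHist)
      (fun v : (𝒳 × 𝒳) × ℋ => (v.1, (π (v.1.2, v.2), v.2)))
      ((hX.prodMk hXtil).prodMk (hat.prodMk hHist))
      (fun v => (v.1, v.2.2)) (fun t => rfl)
  have F4b : shannonEntropy μ (fun ω => (Xtil ω, (π (Xtil ω, Hist ω), Hist ω)))
      = shannonEntropy μ (fun ω => (Xtil ω, Hist ω)) :=
    shannonEntropy_comp_eq_of_leftInv μ (fun ω => (Xtil ω, Hist ω)) (hXtil.prodMk hHist)
      (fun v : 𝒳 × ℋ => (v.1, (π (v.1, v.2), v.2)))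
      (hXtil.prodMk (hat.prodMk hHist))
      (fun v => (v.1, v.2.2)) (fun t => rfl)
  have F4c : shannonEntropy μ (fun ω => (X ω, (π (Xtil ω, Hist ω), Hist ω)))
      = shannonEntropy μ (fun ω => ((X ω, π (Xtil ω, Hist ω)), Hist ω)) :=
    shannonEntropy_comp_eq_of_leftInv μ
      (fun ω => ((X ω, π (Xtil ω, Hist ω)), Hist ω))
      ((hX.prodMk hat).prodMk hHist)
      (fun w : (𝒳 × 𝒜) × ℋ => (w.1.1, (w.1.2, w.2)))
      (hX.prodMk (hat.prodMk hHist))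
      (fun v => ((v.1, v.2.1), v.2.2)) (fun t => rfl)
  simp only [condMutualInfo', condEntropy']
  linarith [F1, F2, F3, F3a, F3b, F3c, F4, F4a, F4b, F4c]
end

section
/- Let (Ω, μ) be a probability space, let 𝒳 be a finite additive group (with the discrete σ-algebra), and let X, δ : Ω → 𝒳 be measurable random variables with δ independent of X. Set X̃ = X + δ (pointwise), A⋆ = X, and take π to be the identity, so that Aπ = X and Ãπ = X̃. Then I[A⋆ : Aπ] + ( I[Aπ : Ãπ] − I[Aπ : δ] ) = H[A⋆] + I[X : X̃]; that is, equality is achieved in the Capability–Robustness Bound. -/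
open MeasureTheory ProbabilityTheory

lemma ent_pair_self {Ω : Type*} [MeasurableSpace Ω] (μ : Measure Ω) {S : Type*} [Fintype S]
    (X : Ω → S) [DecidableEq S] :
    shannonEntropy μ (fun ω => (X ω, X ω)) = shannonEntropy μ X := by
  unfold shannonEntropy
  congr 1
  rw [Fintype.sum_prod_type]
  refine Finset.sum_congr rfl fun s _ => ?_
  rw [Finset.sum_eq_single s]
  · have : (fun ω => (X ω, X ω)) ⁻¹' {(s, s)} = X ⁻¹' {s} := by
      ext ω; simp [Prod.ext_iff]
    rw [this]
  · intro t _ hts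
    have : (fun ω => (X ω, X ω)) ⁻¹' {(s, t)} = ∅ := by
      ext ω; simp [Prod.ext_iff]; rintro rfl rfl; exact hts rfl
    simp [this]
  · intro h; exact absurd (Finset.mem_univ s) h

lemma sum_p_eq_one {Ω : Type*} [MeasurableSpace Ω] (μ : Measure Ω) [IsProbabilityMeasure μ]
    {S : Type*} [Fintype S] [MeasurableSpace S] [DiscreteMeasurableSpace S]
    (X : Ω → S) (hX : Measurable X) :
    ∑ s : S, (μ (X ⁻¹' {s})).toReal = 1 := by
  have h : ∑ s : S, μ (X ⁻¹' {s}) = μ Set.univ := by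
    rw [← measure_biUnion_finset]
    · congr 1
      ext ω; simp
    · intro a _ b _ hab
      simp only [Function.onFun, Set.disjoint_left]
      intro ω ha hb
      exact hab (by simp at ha hb; rw [← ha, ← hb])
    · intro s _; exact hX (MeasurableSet.singleton s)
  have hne : ∀ s : S, μ (X ⁻¹' {s}) ≠ ⊤ := fun s => measure_ne_top μ _
  rw [← ENNReal.toReal_sum (fun s _ => hne s), h, measure_univ, ENNReal.toReal_one]

lemma ent_pair_indep {Ω : Type*} [MeasurableSpace Ω] (μ : Measure Ω) [IsProbabilityMeasure μ]
    {S : Type*} [Fintype S] [MeasurableSpace S] [DiscreteMeasurableSpace S]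
    (X Y : Ω → S) (hX : Measurable X) (hY : Measurable Y)
    (hindep : IndepFun Y X μ) :
    shannonEntropy μ (fun ω => (X ω, Y ω)) = shannonEntropy μ X + shannonEntropy μ Y := by
  classical
  set p : S → ℝ := fun s => (μ (X ⁻¹' {s})).toReal with hp
  set q : S → ℝ := fun t => (μ (Y ⁻¹' {t})).toReal with hq
  have hprod : ∀ s t : S, ((μ ((fun ω => (X ω, Y ω)) ⁻¹' {(s, t)})).toReal) = p s * q t := by
    intro s t
    have hset : (fun ω => (X ω, Y ω)) ⁻¹' {(s, t)} = Y ⁻¹' {t} ∩ X ⁻¹' {s} := by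
      ext ω; simp [Prod.ext_iff, and_comm]
    have := hindep.measure_inter_preimage_eq_mul {t} {s}
      (MeasurableSet.singleton t) (MeasurableSet.singleton s)
    rw [hset, this, ENNReal.toReal_mul]
    ring
  unfold shannonEntropy
  rw [Fintype.sum_prod_type]
  have key : ∀ s t : S,
      (μ ((fun ω => (X ω, Y ω)) ⁻¹' {(s, t)})).toReal *
        Real.log (μ ((fun ω => (X ω, Y ω)) ⁻¹' {(s, t)})).toReal
      = q t * (p s * Real.log (p s)) + p s * (q t * Real.log (q t)) := by
    intro s t
    rw [hprod s t]
    rcases eq_or_ne (p s) 0 with h0 | h0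
    · simp [h0]
    rcases eq_or_ne (q t) 0 with h1 | h1
    · simp [h1]
    rw [Real.log_mul h0 h1]; ring
  calc - ∑ s : S, ∑ t : S,
        (μ ((fun ω => (X ω, Y ω)) ⁻¹' {(s, t)})).toReal *
          Real.log (μ ((fun ω => (X ω, Y ω)) ⁻¹' {(s, t)})).toReal
      = - ∑ s : S, ∑ t : S,
          (q t * (p s * Real.log (p s)) + p s * (q t * Real.log (q t))) := by
        congr 1; exact Finset.sum_congr rfl fun s _ => Finset.sum_congr rfl fun t _ => key s t
    _ = - ((∑ t : S, q t) * (∑ s : S, p s * Real.log (p s))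
          + (∑ s : S, p s) * (∑ t : S, q t * Real.log (q t))) := by
        congr 1
        have hs : ∀ s : S, ∑ t : S,
            (q t * (p s * Real.log (p s)) + p s * (q t * Real.log (q t)))
            = (∑ t : S, q t) * (p s * Real.log (p s))
              + p s * (∑ t : S, q t * Real.log (q t)) := fun s => by
          rw [Finset.sum_add_distrib, ← Finset.sum_mul, ← Finset.mul_sum]
        rw [Finset.sum_congr rfl fun s _ => hs s, Finset.sum_add_distrib,
          ← Finset.mul_sum, ← Finset.sum_mul]
    _ = shannonEntropy μ X + shannonEntropy μ Y := by
        rw [sum_p_eq_one μ X hX, sum_p_eq_one μ Y hY]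
        unfold shannonEntropy
        ring

/-- **Proposition 1 (Achievability under oblivious noise).** With `A⋆ = X`, identity
policy `π = id`, `X̃ = X + δ`, and `δ ⟂ X`, equality holds in the
Capability–Robustness Bound. -/
theorem achievability_oblivious_noise
    {Ω : Type*} [MeasurableSpace Ω] (μ : Measure Ω) [IsProbabilityMeasure μ]
    {𝒳 : Type*} [Fintype 𝒳] [AddGroup 𝒳]
    [MeasurableSpace 𝒳] [DiscreteMeasurableSpace 𝒳]
    (X δ : Ω → 𝒳) (hX : Measurable X) (hδ : Measurable δ)
    (hindep : IndepFun δ X μ) :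
    mutualInfo μ X X
        + (mutualInfo μ X (fun ω => X ω + δ ω) - mutualInfo μ X δ)
      = shannonEntropy μ X + mutualInfo μ X (fun ω => X ω + δ ω) := by
  classical
  have h1 : mutualInfo μ X X = shannonEntropy μ X := by
    unfold mutualInfo
    rw [ent_pair_self]; ring
  have h2 : mutualInfo μ X δ = 0 := by
    unfold mutualInfo
    rw [ent_pair_indep μ X δ hX hδ hindep]; ring
  rw [h1, h2]; ring
end
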